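/- arXiv:2104.04709 — 7 statements merged into one kernel-verified Lean document; each statement's English description precedes it below -/
import Mathlib

section
/- Let l ≥ 1 be a natural number, L = 2^l, and let r₀, r₁ be natural numbers with r₀ < L and r₁ < L. Let m₀ = MSB(r₀), m₁ = MSB(r₁) (the bits of r₀ and r₁ at position l−1), and let m⁰, m¹ be any Booleans whose XOR equals MSB((r₀ + r₁) mod L). Then wrap(r₀, r₁, L) = 1 if and only if (m₀ ∧ m⁰ ∧ m¹) ∨ (m₁ ∧ m⁰ ∧ m¹) ∨ (m₀ ∧ ¬m⁰ ∧ ¬m¹) ∨ (m₁ ∧ ¬m⁰ ∧ ¬m¹) ∨ (m₀ ∧ m₁). -/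
/-!
Write `L = 2h` with `h = 2^(l-1)`, so that the MSB of a number below `L` records whether it is at
least `h`. If both shares have MSB `0` their sum is below `L`, and if both have MSB `1` it is at
least `L`. If exactly one does, the sum lies in `[h, L + h)`, and it reaches `L` exactly when
reducing it modulo `L` clears the MSB. Since `m⁰ ^^ m¹` is that MSB, the formula of the table
collapses to `(m₀ && m₁) || ((m₀ || m₁) && !(m⁰ ^^ m¹))`.
-/

/-- `wrap a₀ a₁ L = 1` if `a₀ + a₁ ≥ L` and `0` otherwise. -/
def wrap (a₀ a₁ L : ℕ) : ℕ := if L ≤ a₀ + a₁ then 1 else 0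

theorem Nat.testBit_eq_decide_two_pow_le {x i : ℕ} (hx : x < 2 ^ (i + 1)) :
    x.testBit i = decide (2 ^ i ≤ x) := by
  by_cases h : 2 ^ i ≤ x
  · simp [h, Nat.testBit_of_two_pow_le_and_two_pow_add_one_gt h hx]
  · simp [h, Nat.testBit_lt_two_pow (Nat.lt_of_not_le h)]

theorem wrap_two_mul_eq_one_iff {h r₀ r₁ : ℕ} (hr₀ : r₀ < 2 * h) (hr₁ : r₁ < 2 * h) :
    wrap r₀ r₁ (2 * h) = 1 ↔
      h ≤ r₀ ∧ h ≤ r₁ ∨ (h ≤ r₀ ∨ h ≤ r₁) ∧ (r₀ + r₁) % (2 * h) < h := by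
  unfold wrap
  by_cases hwrap : 2 * h ≤ r₀ + r₁
  · have hmod : (r₀ + r₁) % (2 * h) = r₀ + r₁ - 2 * h := by
      rw [Nat.mod_eq_sub_mod hwrap, Nat.mod_eq_of_lt (by omega)]
    rw [if_pos hwrap, hmod]
    omega
  · rw [if_neg hwrap, Nat.mod_eq_of_lt (Nat.lt_of_not_le hwrap)]
    omega

theorem wrap_two_pow_eq_one_iff_testBit {k r₀ r₁ : ℕ} (hr₀ : r₀ < 2 ^ (k + 1))
    (hr₁ : r₁ < 2 ^ (k + 1)) :
    wrap r₀ r₁ (2 ^ (k + 1)) = 1 ↔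
      ((r₀.testBit k && r₁.testBit k) ||
        ((r₀.testBit k || r₁.testBit k) && !((r₀ + r₁) % 2 ^ (k + 1)).testBit k)) = true := by
  rw [Nat.testBit_eq_decide_two_pow_le hr₀, Nat.testBit_eq_decide_two_pow_le hr₁,
    Nat.testBit_eq_decide_two_pow_le (Nat.mod_lt _ (by positivity))]
  rw [pow_succ'] at hr₀ hr₁ ⊢
  simp only [Bool.or_eq_true, Bool.and_eq_true, Bool.not_eq_true', decide_eq_true_eq,
    decide_eq_false_iff_not, not_le]
  exact wrap_two_mul_eq_one_iff hr₀ hr₁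

theorem getWrapped_formula_eq (m₀ m₁ a b : Bool) :
    ((m₀ && a && b) || (m₁ && a && b) || (m₀ && !a && !b) || (m₁ && !a && !b) || (m₀ && m₁)) =
      ((m₀ && m₁) || ((m₀ || m₁) && !(a ^^ b))) := by
  cases m₀ <;> cases m₁ <;> cases a <;> cases b <;> rfl

/-- Correctness of the logical formula of Table 1 / Algorithm 3 (GetWrapped):
whether the two shares `r₀, r₁` of a mask wrap around modulo `L = 2^l`,
expressed in terms of the MSBs `m₀, m₁` of the shares and any Booleans
`m⁰, m¹` whose XOR is the MSB of the reconstructed mask. -/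
theorem getWrapped_correct
    (l : ℕ) (hl : 1 ≤ l) (r₀ r₁ : ℕ) (hr₀ : r₀ < 2 ^ l) (hr₁ : r₁ < 2 ^ l)
    (m₀ m₁ : Bool) (hm₀ : m₀ = Nat.testBit r₀ (l - 1)) (hm₁ : m₁ = Nat.testBit r₁ (l - 1))
    (mup0 mup1 : Bool)
    (hxor : Bool.xor mup0 mup1 = Nat.testBit ((r₀ + r₁) % 2 ^ l) (l - 1)) :
    wrap r₀ r₁ (2 ^ l) = 1 ↔
      ((m₀ && mup0 && mup1) || (m₁ && mup0 && mup1) ||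
       (m₀ && !mup0 && !mup1) || (m₁ && !mup0 && !mup1) || (m₀ && m₁)) = true := by
  obtain ⟨k, rfl⟩ : ∃ k, l = k + 1 := ⟨l - 1, by omega⟩
  rw [getWrapped_formula_eq, hxor, hm₀, hm₁]
  exact wrap_two_pow_eq_one_iff_testBit hr₀ hr₁
end

section
/- Let l ≥ 1 be a natural number, L = 2^l, and let c₀, c₁ be natural numbers with c₀ < L and c₁ < L. Let c = (c₀ + c₁) mod L. Then MSB(c) = MSB(c₀) XOR MSB(c₁) XOR (wrap((2·c₀) mod L, (2·c₁) mod L, L) = 1). -/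
theorem wrap_eq_one_iff {a₀ a₁ L : ℕ} : wrap a₀ a₁ L = 1 ↔ L ≤ a₀ + a₁ := by
  unfold wrap; split_ifs <;> simp_all

theorem Nat.two_mul_mod_two_pow_succ (c k : ℕ) : 2 * c % 2 ^ (k + 1) = 2 * (c % 2 ^ k) := by
  rw [Nat.pow_succ', Nat.mul_mod_mul_left]

theorem Nat.testBit_add_eq_xor_carry (c₀ c₁ i : ℕ) :
    (c₀ + c₁).testBit i =
      (c₀.testBit i ^^ (c₁.testBit i ^^ decide (2 ^ i ≤ c₀ % 2 ^ i + c₁ % 2 ^ i))) := by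
  have h := BitVec.getLsbD_add (Nat.lt_succ_self i)
    (BitVec.ofNat (i + 1) c₀) (BitVec.ofNat (i + 1) c₁)
  simpa [BitVec.getLsbD, BitVec.carry,
    Nat.mod_mod_of_dvd _ (Nat.pow_dvd_pow 2 (Nat.le_succ i))] using h

theorem msb_of_shares_general
    (l : ℕ) (hl : 1 ≤ l) (c₀ c₁ : ℕ)
    (c : ℕ) (hc : c = (c₀ + c₁) % 2 ^ l) :
    Nat.testBit c (l - 1) =
      Bool.xor (Nat.testBit c₀ (l - 1))
        (Bool.xor (Nat.testBit c₁ (l - 1))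
          (decide (wrap (2 * c₀ % 2 ^ l) (2 * c₁ % 2 ^ l) (2 ^ l) = 1))) := by
  obtain ⟨k, rfl⟩ : ∃ k, l = k + 1 := ⟨l - 1, by omega⟩
  have hwrap : wrap (2 * c₀ % 2 ^ (k + 1)) (2 * c₁ % 2 ^ (k + 1)) (2 ^ (k + 1)) = 1 ↔
      2 ^ k ≤ c₀ % 2 ^ k + c₁ % 2 ^ k := by
    rw [wrap_eq_one_iff, Nat.two_mul_mod_two_pow_succ, Nat.two_mul_mod_two_pow_succ, Nat.pow_succ']
    omega
  rw [hc, Nat.add_sub_cancel, Nat.testBit_mod_two_pow, decide_eq_true (Nat.lt_succ_self k),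
    Bool.true_and, Nat.testBit_add_eq_xor_carry, decide_eq_decide.mpr hwrap.symm]

/-- Equation (10) of the paper: the most significant bit of an additively
shared value `c = (c₀ + c₁) mod 2^l` equals the XOR of the MSBs of its two
shares and the wrap of the doubled shares. -/
theorem msb_of_shares
    (l : ℕ) (hl : 1 ≤ l) (c₀ c₁ : ℕ) (hc₀ : c₀ < 2 ^ l) (hc₁ : c₁ < 2 ^ l)
    (c : ℕ) (hc : c = (c₀ + c₁) % 2 ^ l) :
    Nat.testBit c (l - 1) =
      Bool.xor (Nat.testBit c₀ (l - 1))
        (Bool.xor (Nat.testBit c₁ (l - 1))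
          (decide (wrap (2 * c₀ % 2 ^ l) (2 * c₁ % 2 ^ l) (2 ^ l) = 1))) :=
  msb_of_shares_general l hl c₀ c₁ c hc
end

section
/- Let l ≥ 1 be a natural number, L = 2^l, and let u₀, u₁, r₀, r₁ be natural numbers, all < L. Define x₀ = (u₀ + r₀) mod L, x₁ = (u₁ + r₁) mod L, x = (x₀ + x₁) mod L, and r = (r₀ + r₁) mod L. Then, as an equality of integers, wrap(u₀, u₁, L) = wrap(u₀, r₀, L) + wrap(u₁, r₁, L) + wrap(x₀, x₁, L) − η − wrap(r₀, r₁, L), where η = 1 if x < r and η = 0 otherwise. -/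
/-!
For `a, b < L` the carry `wrap a b L` is the quotient in `a + b = (a + b) % L + L * wrap a b L`.
Summing the four shares as `(u₀ + r₀) + (u₁ + r₁)` or as `(u₀ + u₁) + (r₀ + r₁)`, the three carries
of either bracketing add up to `(u₀ + u₁ + r₀ + r₁) / L`. The third carry of the second bracketing,
`wrap ((u₀ + u₁) % L) r L`, is `η`: its residue is `x`, and a sum modulo `L` wraps around exactly
when it drops below a summand.
-/

section Wrap

variable {a b c d L : ℕ}

theorem mod_add_mul_wrap (ha : a < L) (hb : b < L) : (a + b) % L + L * wrap a b L = a + b := by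
  unfold wrap
  split_ifs with h
  · rw [Nat.mod_eq_sub_mod h, Nat.mod_eq_of_lt (by omega)]
    omega
  · rw [Nat.mod_eq_of_lt (by omega)]
    omega

theorem wrap_eq_ite_add_mod_lt (ha : a < L) (hb : b < L) :
    wrap a b L = if (a + b) % L < b then 1 else 0 := by
  have h := mod_add_mul_wrap ha hb
  unfold wrap at *
  split_ifs at * <;> omega

theorem wrap_add_wrap_add_wrap_mod (ha : a < L) (hb : b < L) (hc : c < L) (hd : d < L) :
    wrap a b L + wrap c d L + wrap ((a + b) % L) ((c + d) % L) L = (a + b + c + d) / L := by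
  have hL : 0 < L := by omega
  have hab := mod_add_mul_wrap ha hb
  have hcd := mod_add_mul_wrap hc hd
  have hsum := mod_add_mul_wrap (Nat.mod_lt (a + b) hL) (Nat.mod_lt (c + d) hL)
  have hdecomp : a + b + c + d = ((a + b) % L + (c + d) % L) % L +
      L * (wrap a b L + wrap c d L + wrap ((a + b) % L) ((c + d) % L) L) := by
    linarith
  rw [hdecomp, Nat.add_mul_div_left _ _ hL, Nat.div_eq_of_lt (Nat.mod_lt _ hL), zero_add]

end Wrap

theorem wrap_identity_general
    (l : ℕ) (u₀ u₁ r₀ r₁ : ℕ)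
    (hu₀ : u₀ < 2 ^ l) (hu₁ : u₁ < 2 ^ l) (hr₀ : r₀ < 2 ^ l) (hr₁ : r₁ < 2 ^ l)
    (x₀ x₁ x r : ℕ)
    (hx₀ : x₀ = (u₀ + r₀) % 2 ^ l) (hx₁ : x₁ = (u₁ + r₁) % 2 ^ l)
    (hx : x = (x₀ + x₁) % 2 ^ l) (hr : r = (r₀ + r₁) % 2 ^ l)
    (η : ℤ) (hη : η = if x < r then 1 else 0) :
    (wrap u₀ u₁ (2 ^ l) : ℤ) =
      (wrap u₀ r₀ (2 ^ l) : ℤ) + (wrap u₁ r₁ (2 ^ l) : ℤ) +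
        (wrap x₀ x₁ (2 ^ l) : ℤ) - η - (wrap r₀ r₁ (2 ^ l) : ℤ) := by
  set L := 2 ^ l
  have hL : 0 < L := by positivity
  have hxu : x = ((u₀ + u₁) % L + r) % L := by
    rw [hx, hx₀, hx₁, hr, Nat.mod_add_mod, Nat.add_mod_mod, Nat.mod_add_mod, Nat.add_mod_mod]
    congr 1
    ring
  have hηu : η = wrap ((u₀ + u₁) % L) r L := by
    rw [hη, wrap_eq_ite_add_mod_lt (Nat.mod_lt _ hL) (hr ▸ Nat.mod_lt _ hL), ← hxu]
    split_ifs <;> rfl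
  have hmasked := wrap_add_wrap_add_wrap_mod hu₀ hr₀ hu₁ hr₁
  have hunmasked := wrap_add_wrap_add_wrap_mod hu₀ hu₁ hr₀ hr₁
  rw [← hx₀, ← hx₁] at hmasked
  rw [← hr, add_right_comm u₀ u₁ r₀] at hunmasked
  rw [hηu]
  omega

/-- The wrap identity justifying line 9 of Algorithm 5 (Secret Sharing
Comparison): `wrap(u₀,u₁,L) = β₀ + β₁ + δ - η - α` as integers. -/
theorem wrap_identity
    (l : ℕ) (hl : 1 ≤ l) (u₀ u₁ r₀ r₁ : ℕ)
    (hu₀ : u₀ < 2 ^ l) (hu₁ : u₁ < 2 ^ l) (hr₀ : r₀ < 2 ^ l) (hr₁ : r₁ < 2 ^ l)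
    (x₀ x₁ x r : ℕ)
    (hx₀ : x₀ = (u₀ + r₀) % 2 ^ l) (hx₁ : x₁ = (u₁ + r₁) % 2 ^ l)
    (hx : x = (x₀ + x₁) % 2 ^ l) (hr : r = (r₀ + r₁) % 2 ^ l)
    (η : ℤ) (hη : η = if x < r then 1 else 0) :
    (wrap u₀ u₁ (2 ^ l) : ℤ) =
      (wrap u₀ r₀ (2 ^ l) : ℤ) + (wrap u₁ r₁ (2 ^ l) : ℤ) +
        (wrap x₀ x₁ (2 ^ l) : ℤ) - η - (wrap r₀ r₁ (2 ^ l) : ℤ) :=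
  wrap_identity_general l u₀ u₁ r₀ r₁ hu₀ hu₁ hr₀ hr₁ x₀ x₁ x r hx₀ hx₁ hx hr η hη
end

section
/- Let l ≥ 1 be a natural number, L = 2^l, and let a₀, a₁, r₀, r₁ be natural numbers, all < L. Define a = (a₀ + a₁) mod L, x₀ = ((2a₀ mod L) + r₀) mod L, x₁ = ((2a₁ mod L) + r₁) mod L, x = (x₀ + x₁) mod L, r = (r₀ + r₁) mod L, β₀ = wrap(2a₀ mod L, r₀, L), β₁ = wrap(2a₁ mod L, r₁, L), δ = wrap(x₀, x₁, L), α = wrap(r₀, r₁, L), and η = 1 if x < r, else 0. Then MSB(a) = MSB(a₀) XOR MSB(a₁) XOR ((β₀ + β₁ + δ − η − α) is odd). -/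
/-!
Doubling the shares gives `2a₀ + 2a₁ = 2a + 2·wrap(a₀, a₁)·L`, while reducing `2aᵢ` modulo `L`
drops exactly `MSB(aᵢ)·L`. Masking with `r` and unmasking only moves multiples of `L` around,
counted by `β₀, β₁, δ, α`, and the borrow `η` of `x - r` makes `2a mod L = x - r + η·L`
exactly. Comparing the multiples of `L` on both sides gives
`β₀ + β₁ + δ - η - α = MSB(a) + 2·wrap(a₀, a₁) - MSB(a₀) - MSB(a₁)`, and reducing modulo 2
gives the claim.
-/

theorem wrap_eq_add_div {u v L : ℕ} (hu : u < L) (hv : v < L) : wrap u v L = (u + v) / L := by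
  unfold wrap
  split_ifs with h
  · exact (Nat.div_eq_of_lt_le (by omega) (by omega)).symm
  · exact (Nat.div_eq_of_lt (by omega)).symm

theorem add_mod_add_wrap_mul {u v L : ℕ} (hu : u < L) (hv : v < L) :
    (u + v) % L + wrap u v L * L = u + v := by
  rw [wrap_eq_add_div hu hv, Nat.mod_add_div']

theorem Int.natCast_sub_emod_of_lt {x r L : ℕ} (hx : x < L) (hr : r < L) :
    ((x : ℤ) - r) % L = x - r + (if x < r then 1 else 0) * L := by
  split_ifs with h
  · rw [← Int.add_mul_emod_self_right _ 1, Int.emod_eq_of_lt] <;> omega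
  · rw [Int.emod_eq_of_lt] <;> omega

theorem Nat.toNat_testBit_sub_one {n l : ℕ} (hl : 1 ≤ l) (hn : n < 2 ^ l) :
    (n.testBit (l - 1)).toNat = 2 * n / 2 ^ l := by
  obtain ⟨k, rfl⟩ : ∃ k, l = k + 1 := ⟨l - 1, by omega⟩
  have hlt : n / 2 ^ k < 2 := Nat.div_lt_of_lt_mul (by rwa [← pow_succ])
  rw [Nat.toNat_testBit, Nat.add_sub_cancel, Nat.mod_eq_of_lt hlt, pow_succ',
    Nat.mul_div_mul_left _ _ two_pos]

theorem wrap_sum_sub_borrow_eq {L a₀ a₁ r₀ r₁ x₀ x₁ : ℕ} (ha₀ : a₀ < L) (ha₁ : a₁ < L)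
    (hr₀ : r₀ < L) (hr₁ : r₁ < L)
    (hx₀ : x₀ = (2 * a₀ % L + r₀) % L) (hx₁ : x₁ = (2 * a₁ % L + r₁) % L) :
    (wrap (2 * a₀ % L) r₀ L + wrap (2 * a₁ % L) r₁ L + wrap x₀ x₁ L : ℤ)
        - (if (x₀ + x₁) % L < (r₀ + r₁) % L then 1 else 0) - wrap r₀ r₁ L
      = (2 * ((a₀ + a₁) % L) / L : ℕ) + 2 * wrap a₀ a₁ L - (2 * a₀ / L : ℕ)
        - (2 * a₁ / L : ℕ) := by
  have hL : 0 < L := by omega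
  have hy₀ := hx₀ ▸ add_mod_add_wrap_mul (Nat.mod_lt (2 * a₀) hL) hr₀
  have hy₁ := hx₁ ▸ add_mod_add_wrap_mul (Nat.mod_lt (2 * a₁) hL) hr₁
  have hx := add_mod_add_wrap_mul (hx₀ ▸ Nat.mod_lt _ hL : x₀ < L) (hx₁ ▸ Nat.mod_lt _ hL)
  have hr := add_mod_add_wrap_mul hr₀ hr₁
  have ha := add_mod_add_wrap_mul ha₀ ha₁
  have hd₀ := Nat.mod_add_div' (2 * a₀) L
  have hd₁ := Nat.mod_add_div' (2 * a₁) L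
  have hd := Nat.mod_add_div' (2 * ((a₀ + a₁) % L)) L
  have hborrow := Int.natCast_sub_emod_of_lt (Nat.mod_lt (x₀ + x₁) hL) (Nat.mod_lt (r₀ + r₁) hL)
  -- not `push_cast`: the casts of `%` and `/` must stay atoms for `linear_combination`
  simp only [← Nat.cast_inj (R := ℤ), Nat.cast_add, Nat.cast_mul, Nat.cast_ofNat]
    at hy₀ hy₁ hx hr ha hd₀ hd₁ hd
  set a := (a₀ + a₁) % L
  set carry : ℤ := wrap (2 * a₀ % L) r₀ L + wrap (2 * a₁ % L) r₁ L + wrap x₀ x₁ L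
    - wrap r₀ r₁ L + (2 * a₀ / L : ℕ) + (2 * a₁ / L : ℕ) - 2 * wrap a₀ a₁ L
  have h2a : 2 * (a : ℤ) = ((x₀ + x₁) % L : ℕ) - ((r₀ + r₁) % L : ℕ) + carry * L := by
    linear_combination 2 * ha - hd₀ - hd₁ - hy₀ - hy₁ - hx + hr
  have hz : ((2 * a % L : ℕ) : ℤ) = ((x₀ + x₁) % L : ℕ) - ((r₀ + r₁) % L : ℕ)
      + (if (x₀ + x₁) % L < (r₀ + r₁) % L then 1 else 0) * L := by
    rw [← hborrow, Int.natCast_mod, Nat.cast_mul, Nat.cast_ofNat, h2a,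
      Int.add_mul_emod_self_right]
  refine mul_right_cancel₀ (Int.natCast_ne_zero.mpr hL.ne') ?_
  linear_combination hz - hd - h2a

theorem Bool.xor_xor_decide_odd (s p q : Bool) (k : ℤ) :
    xor p (xor q (decide (Odd ((s.toNat : ℤ) + 2 * k - p.toNat - q.toNat)))) = s := by
  cases s <;> cases p <;> cases q <;> simp [Int.odd_iff]

/-- Overall correctness of Algorithm 5 (Secret Sharing Comparison): the most
significant bit of the shared value `a = (a₀ + a₁) mod 2^l` is the XOR of the
MSBs of the shares and the parity of `β₀ + β₁ + δ - η - α`. -/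
theorem secret_sharing_comparison_correct
    (l : ℕ) (hl : 1 ≤ l) (a₀ a₁ r₀ r₁ : ℕ)
    (ha₀ : a₀ < 2 ^ l) (ha₁ : a₁ < 2 ^ l) (hr₀ : r₀ < 2 ^ l) (hr₁ : r₁ < 2 ^ l)
    (a x₀ x₁ x r : ℕ)
    (ha : a = (a₀ + a₁) % 2 ^ l)
    (hx₀ : x₀ = (2 * a₀ % 2 ^ l + r₀) % 2 ^ l)
    (hx₁ : x₁ = (2 * a₁ % 2 ^ l + r₁) % 2 ^ l)
    (hx : x = (x₀ + x₁) % 2 ^ l) (hr : r = (r₀ + r₁) % 2 ^ l)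
    (β₀ β₁ δ α η : ℤ)
    (hβ₀ : β₀ = wrap (2 * a₀ % 2 ^ l) r₀ (2 ^ l))
    (hβ₁ : β₁ = wrap (2 * a₁ % 2 ^ l) r₁ (2 ^ l))
    (hδ : δ = wrap x₀ x₁ (2 ^ l)) (hα : α = wrap r₀ r₁ (2 ^ l))
    (hη : η = if x < r then 1 else 0) :
    Nat.testBit a (l - 1) =
      Bool.xor (Nat.testBit a₀ (l - 1))
        (Bool.xor (Nat.testBit a₁ (l - 1))
          (decide (Odd (β₀ + β₁ + δ - η - α)))) := by
  have haL : a < 2 ^ l := ha ▸ Nat.mod_lt _ (Nat.two_pow_pos l)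
  subst hx hr hβ₀ hβ₁ hδ hα hη
  rw [wrap_sum_sub_borrow_eq ha₀ ha₁ hr₀ hr₁ hx₀ hx₁, ← ha, ← Nat.toNat_testBit_sub_one hl haL,
    ← Nat.toNat_testBit_sub_one hl ha₀, ← Nat.toNat_testBit_sub_one hl ha₁, Bool.xor_xor_decide_odd]
end

section
/- Let l ≥ 1 be a natural number and let x, r be natural numbers with x < 2^l and r < 2^l. For each j with 0 ≤ j < l define the integer c_j = 1 − (x_j − r_j) + Σ_{k=j+1}^{l−1} (x_k XOR r_k), where x_k, r_k ∈ {0,1} denote the k-th binary digits of x and r (bit l−1 being the most significant). Then x > r if and only if there exists j with 0 ≤ j < l and c_j = 0. Moreover, every c_j satisfies 0 ≤ c_j ≤ l + 1. -/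
/-!
`c_j` splits into two nonnegative parts: the slack `1 - (x_j - r_j)`, which vanishes exactly when
`x_j = 1` and `r_j = 0`, and the number of more significant positions where `x` and `r` differ.
So `c_j = 0` says that `j` is the most significant position where `x` and `r` differ and that `x`
has the `1` there, which is how `r < x` is read off binary expansions.
-/

open Finset

namespace Nat

theorem lt_iff_exists_testBit {r x : ℕ} :
    r < x ↔ ∃ j, r.testBit j = false ∧ x.testBit j = true ∧
      ∀ k, j < k → r.testBit k = x.testBit k := by
  refine ⟨fun hrx => ?_, fun ⟨j, hr, hx, hhigh⟩ => lt_of_testBit j hr hx hhigh⟩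
  have hxor : r ^^^ x ≠ 0 := fun h => hrx.ne <| eq_of_testBit_eq fun i => by
    simpa [testBit_xor] using congrArg (testBit · i) h
  obtain ⟨j, hj, hhigh⟩ := exists_most_significant_bit hxor
  simp only [testBit_xor, bne_iff_ne, ne_eq, bne_eq_false_iff_eq] at hj hhigh
  cases hrj : r.testBit j
  · exact ⟨j, hrj, by simpa [hrj] using hj, hhigh⟩
  · have hxj : x.testBit j = false := by simpa [hrj] using hj
    exact absurd (lt_of_testBit j hxj hrj fun k hk => (hhigh k hk).symm) hrx.not_gt

theorem testBit_eq_testBit_of_lt_two_pow {l x r k : ℕ} (hx : x < 2 ^ l) (hr : r < 2 ^ l)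
    (hk : l ≤ k) : x.testBit k = r.testBit k := by
  have hpow : 2 ^ l ≤ 2 ^ k := Nat.pow_le_pow_right two_pos hk
  rw [testBit_lt_two_pow (hx.trans_le hpow), testBit_lt_two_pow (hr.trans_le hpow)]

theorem lt_iff_exists_testBit_of_lt_two_pow {l x r : ℕ} (hx : x < 2 ^ l) (hr : r < 2 ^ l) :
    r < x ↔ ∃ j < l, r.testBit j = false ∧ x.testBit j = true ∧
      ∀ k ∈ Ico (j + 1) l, x.testBit k = r.testBit k := by
  rw [lt_iff_exists_testBit]
  constructor
  · rintro ⟨j, hrj, hxj, hhigh⟩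
    have hjl : j < l := by
      by_contra! hlj
      simpa [hrj, hxj] using testBit_eq_testBit_of_lt_two_pow hx hr hlj
    exact ⟨j, hjl, hrj, hxj, fun k hk => (hhigh k (mem_Ico.1 hk).1).symm⟩
  · rintro ⟨j, -, hrj, hxj, hhigh⟩
    refine ⟨j, hrj, hxj, fun k hjk => ?_⟩
    rcases lt_or_ge k l with hkl | hlk
    · exact (hhigh k (mem_Ico.2 ⟨hjk, hkl⟩)).symm
    · exact (testBit_eq_testBit_of_lt_two_pow hx hr hlk).symm

end Nat

def bitSlack (a b : Bool) : ℤ :=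
  1 - ((if a then 1 else 0) - if b then 1 else 0)

theorem bitSlack_nonneg (a b : Bool) : 0 ≤ bitSlack a b := by
  cases a <;> cases b <;> decide

theorem bitSlack_le_two (a b : Bool) : bitSlack a b ≤ 2 := by
  cases a <;> cases b <;> decide

theorem bitSlack_eq_zero_iff {a b : Bool} : bitSlack a b = 0 ↔ b = false ∧ a = true := by
  cases a <;> cases b <;> decide

/-- `c_j` of Equation 11. -/
def comparisonTerm (l x r j : ℕ) : ℤ :=
  bitSlack (x.testBit j) (r.testBit j) +
    ∑ k ∈ Ico (j + 1) l, if x.testBit k ≠ r.testBit k then 1 else 0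

section comparisonTerm

variable {l x r j : ℕ}

theorem comparisonTerm_eq_card :
    comparisonTerm l x r j =
      bitSlack (x.testBit j) (r.testBit j) + #{k ∈ Ico (j + 1) l | x.testBit k ≠ r.testBit k} := by
  rw [comparisonTerm, sum_boole]

theorem comparisonTerm_nonneg : 0 ≤ comparisonTerm l x r j := by
  rw [comparisonTerm_eq_card]
  exact add_nonneg (bitSlack_nonneg _ _) (Nat.cast_nonneg _)

theorem comparisonTerm_le (hj : j < l) : comparisonTerm l x r j ≤ l + 1 := by
  have hcard : #{k ∈ Ico (j + 1) l | x.testBit k ≠ r.testBit k} ≤ l - (j + 1) :=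
    (card_filter_le _ _).trans (Nat.card_Ico _ _).le
  have hslack := bitSlack_le_two (x.testBit j) (r.testBit j)
  rw [comparisonTerm_eq_card]
  omega

theorem comparisonTerm_eq_zero_iff :
    comparisonTerm l x r j = 0 ↔ r.testBit j = false ∧ x.testBit j = true ∧
      ∀ k ∈ Ico (j + 1) l, x.testBit k = r.testBit k := by
  rw [comparisonTerm_eq_card, add_eq_zero_iff_of_nonneg (bitSlack_nonneg _ _) (Nat.cast_nonneg _),
    bitSlack_eq_zero_iff, Nat.cast_eq_zero, card_eq_zero, filter_eq_empty_iff, and_assoc]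
  simp only [not_not]

end comparisonTerm

theorem bitwise_comparison_correct_general
    (l x r : ℕ) (hx : x < 2 ^ l) (hr : r < 2 ^ l)
    (c : ℕ → ℤ)
    (hc : ∀ j < l,
      c j = 1 - ((if Nat.testBit x j then (1 : ℤ) else 0) -
                 (if Nat.testBit r j then (1 : ℤ) else 0)) +
            ∑ k ∈ Finset.Ico (j + 1) l,
              (if Nat.testBit x k ≠ Nat.testBit r k then (1 : ℤ) else 0)) :
    (x > r ↔ ∃ j < l, c j = 0) ∧ ∀ j < l, 0 ≤ c j ∧ c j ≤ l + 1 := by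
  have hc_term : ∀ j < l, c j = comparisonTerm l x r j := hc
  refine ⟨?_, fun j hj => hc_term j hj ▸ ⟨comparisonTerm_nonneg, comparisonTerm_le hj⟩⟩
  rw [gt_iff_lt, Nat.lt_iff_exists_testBit_of_lt_two_pow hx hr]
  refine exists_congr fun j => and_congr_right fun hj => ?_
  rw [hc_term j hj, comparisonTerm_eq_zero_iff]

/-- Correctness of the bitwise comparison underlying Algorithm 5
(Equation 11): `x > r` exactly when some
`c_j = 1 - (x_j - r_j) + Σ_{k=j+1}^{l-1} (x_k ⊕ r_k)` vanishes, and each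
`c_j` lies between `0` and `l + 1`. -/
theorem bitwise_comparison_correct
    (l x r : ℕ) (hl : 1 ≤ l) (hx : x < 2 ^ l) (hr : r < 2 ^ l)
    (c : ℕ → ℤ)
    (hc : ∀ j < l,
      c j = 1 - ((if Nat.testBit x j then (1 : ℤ) else 0) -
                 (if Nat.testBit r j then (1 : ℤ) else 0)) +
            ∑ k ∈ Finset.Ico (j + 1) l,
              (if Nat.testBit x k ≠ Nat.testBit r k then (1 : ℤ) else 0)) :
    (x > r ↔ ∃ j < l, c j = 0) ∧ ∀ j < l, 0 ≤ c j ∧ c j ≤ l + 1 :=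
  bitwise_comparison_correct_general l x r hx hr c hc
end

section
/- Let p be a prime, let l be an even natural number, let c₀, c₁ : Fin l → ZMod p, let σ be a permutation of Fin (l/2), let N ∈ ZMod p with N ≠ 0, and let M : Fin (l/2) → ZMod p with M j ≠ 0 for all j. For j : Fin (l/2) define d j = (c₀ j + c₁ j) · (c₀ (j + l/2) + c₁ (j + l/2)). Then (there exists j : Fin (l/2) with N · M (σ j) · d (σ j) = 0) if and only if (there exists j < l with c₀ j + c₁ j = 0). -/
theorem exists_fin_mul_apply_add_eq_zero_iff {R : Type*} [MulZeroClass R] [NoZeroDivisors R]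
    (f : ℕ → R) (n : ℕ) :
    (∃ j : Fin n, f j * f (j + n) = 0) ↔ ∃ j < n + n, f j = 0 := by
  constructor
  · rintro ⟨j, hj⟩
    rcases mul_eq_zero.1 hj with h | h
    · exact ⟨j, by omega, h⟩
    · exact ⟨j + n, by omega, h⟩
  · rintro ⟨j, hj, h⟩
    by_cases hjn : j < n
    · exact ⟨⟨j, hjn⟩, by simp [h]⟩
    · refine ⟨⟨j - n, by omega⟩, ?_⟩
      rw [show j - n + n = j by omega]
      simp [h]

/-- End-to-end correctness of Algorithm 4 (CheckZero): pairwise multiplying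
the reconstructed values, masking by nonzero field elements `N` and `M j`,
and shuffling by a permutation `σ` yields a zero among the final masked
values exactly when some original shared value `c₀ j + c₁ j` is zero. -/
theorem checkZero_correct
    (p l : ℕ) (hp : p.Prime) (hl : Even l)
    (c₀ c₁ : ℕ → ZMod p) (σ : Equiv.Perm (Fin (l / 2)))
    (N : ZMod p) (hN : N ≠ 0)
    (M : Fin (l / 2) → ZMod p) (hM : ∀ j, M j ≠ 0)
    (d : Fin (l / 2) → ZMod p)
    (hd : ∀ j : Fin (l / 2),
      d j = (c₀ (j : ℕ) + c₁ (j : ℕ)) *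
            (c₀ ((j : ℕ) + l / 2) + c₁ ((j : ℕ) + l / 2))) :
    (∃ j : Fin (l / 2), N * M (σ j) * d (σ j) = 0) ↔
      ∃ j < l, c₀ j + c₁ j = 0 := by
  have := Fact.mk hp
  have halves : l / 2 + l / 2 = l := by rw [← two_mul, Nat.two_mul_div_two_of_even hl]
  calc (∃ j, N * M (σ j) * d (σ j) = 0)
    _ ↔ ∃ j, d (σ j) = 0 := by simp only [mul_eq_zero, hN, hM, or_false, false_or]
    _ ↔ ∃ j, d j = 0 := (σ.surjective.exists (p := fun j => d j = 0)).symm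
    _ ↔ ∃ j < l / 2 + l / 2, c₀ j + c₁ j = 0 := by
      simp only [hd]
      exact exists_fin_mul_apply_add_eq_zero_iff (fun j => c₀ j + c₁ j) (l / 2)
    _ ↔ ∃ j < l, c₀ j + c₁ j = 0 := by rw [halves]
end

section
/- Let a, c be real numbers with 1/2 ≤ c ≤ 1, and define w₀ = 2.9142 − 2c, ε₀ = 1 − c·w₀, ε₁ = ε₀², ε₂ = ε₁². Then a·w₀·(1 + ε₀)·(1 + ε₁)·(1 + ε₂) = (a/c)·(1 − ε₀⁸), and hence |a·w₀·(1 + ε₀)·(1 + ε₁)·(1 + ε₂) − a/c| ≤ |a/c| · 0.0858⁸. -/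
/-!
Since `c · w₀ = 1 - ε₀`, multiplying the output by `c` telescopes:
`(1 - ε)(1 + ε)(1 + ε²)(1 + ε⁴) = 1 - ε⁸`, so each refinement step squares the relative error.
The initial error `ε₀ = 2c² - 2.9142 c + 1` is a convex quadratic in `c`, with minimum
`≈ -0.0616` at `c ≈ 0.7286` and maximum `0.0858` on `[1/2, 1]`, attained at `c = 1`.
-/

open Finset

theorem one_sub_mul_prod_one_add_pow_two_pow {R : Type*} [CommRing R] (x : R) (n : ℕ) :
    (1 - x) * ∏ i ∈ range n, (1 + x ^ 2 ^ i) = 1 - x ^ 2 ^ n := by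
  induction n with
  | zero => simp
  | succ n ih =>
    rw [prod_range_succ, ← mul_assoc, ih, pow_succ, pow_mul]
    ring

theorem mul_mul_prod_one_add_pow_two_pow {K : Type*} [Field K] {a c w ε : K} (hc : c ≠ 0)
    (hw : c * w = 1 - ε) (n : ℕ) :
    a * w * ∏ i ∈ range n, (1 + ε ^ 2 ^ i) = a / c * (1 - ε ^ 2 ^ n) := by
  rw [← one_sub_mul_prod_one_add_pow_two_pow, ← hw]
  field_simp

theorem abs_mul_one_sub_pow_sub_le {K : Type*} [Field K] [LinearOrder K] [IsStrictOrderedRing K]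
    {q ε δ : K} (hε : |ε| ≤ δ) (n : ℕ) :
    |q * (1 - ε ^ n) - q| ≤ |q| * δ ^ n := by
  rw [show q * (1 - ε ^ n) - q = -(q * ε ^ n) by ring, abs_neg, abs_mul, abs_pow]
  gcongr

theorem abs_one_sub_mul_initial_approx_le {c : ℝ} (hc₁ : 1 / 2 ≤ c) (hc₂ : c ≤ 1) :
    |1 - c * (2.9142 - 2 * c)| ≤ 0.0858 := by
  rw [abs_le]
  constructor <;> nlinarith [sq_nonneg (c - 0.72855)]

/-- Correctness of the iterative refinement in Algorithm 8 (Secret Sharing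
Division): with `w₀ = 2.9142 - 2c`, `ε₀ = 1 - c·w₀`, `ε₁ = ε₀²`, `ε₂ = ε₁²`,
the output `a·w₀·(1+ε₀)(1+ε₁)(1+ε₂)` equals `(a/c)·(1 - ε₀⁸)`, so the error
is at most `|a/c| · 0.0858⁸`. -/
theorem division_refinement_correct
    (a c : ℝ) (hc₁ : 1 / 2 ≤ c) (hc₂ : c ≤ 1)
    (w₀ ε₀ ε₁ ε₂ : ℝ)
    (hw₀ : w₀ = 2.9142 - 2 * c) (hε₀ : ε₀ = 1 - c * w₀)
    (hε₁ : ε₁ = ε₀ ^ 2) (hε₂ : ε₂ = ε₁ ^ 2) :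
    a * w₀ * (1 + ε₀) * (1 + ε₁) * (1 + ε₂) = (a / c) * (1 - ε₀ ^ 8) ∧
      |a * w₀ * (1 + ε₀) * (1 + ε₁) * (1 + ε₂) - a / c| ≤ |a / c| * 0.0858 ^ 8 := by
  have hc : c ≠ 0 := by linarith
  have hw : c * w₀ = 1 - ε₀ := by linarith
  have hout : a * w₀ * (1 + ε₀) * (1 + ε₁) * (1 + ε₂) = a / c * (1 - ε₀ ^ 8) := by
    have h := mul_mul_prod_one_add_pow_two_pow (a := a) hc hw 3
    simp only [prod_range_succ, prod_range_zero, hε₁, hε₂] at h ⊢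
    linear_combination h
  have hε : |ε₀| ≤ 0.0858 := hε₀ ▸ hw₀ ▸ abs_one_sub_mul_initial_approx_le hc₁ hc₂
  exact ⟨hout, hout ▸ abs_mul_one_sub_pow_sub_le hε 8⟩
end
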